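/- Let A ⊆ ℝ^{d−1} be a measurable set such that both A and its complement have positive measure (A is a.e. proper). Then the indicator function 𝟙_A belongs to the Sobolev space H^s(ℝ^{d−1}) only if s < 1/2; in particular 𝟙_A ∉ H^{1/2}(ℝ^{d−1}). -/

import Mathlib

open MeasureTheory

/-- Membership of a function in the fractional Sobolev space `H^s(ℝ^n)` (Gagliardo definition). -/
def MemHs {n : ℕ} (s : ℝ) (u : EuclideanSpace ℝ (Fin n) → ℝ) : Prop :=
  MemLp u 2 (volume : Measure (EuclideanSpace ℝ (Fin n))) ∧
    (∫⁻ x : EuclideanSpace ℝ (Fin n), ∫⁻ y : EuclideanSpace ℝ (Fin n),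
      ENNReal.ofReal ((u x - u y) ^ 2 / ‖x - y‖ ^ ((n : ℝ) + 2 * s))) < ⊤

/-!
Write `g x = ∫ (u x - u y)² / ‖x - y‖ ^ (n + 2s) dy` for `u = 𝟙_A`, so that the squared Gagliardo
seminorm of `u` is `∫ g`. Call `x` good if `g x ≤ M`. If `p ∈ A` and `q ∉ A` are good, the ball with
diameter `[p, q]` is covered by the part of `B(p, |p - q|)` outside `A` and the part of
`B(q, |p - q|)` inside `A`, each of measure at most `M |p - q| ^ (n + 2s)`; hence
`|p - q| ^ (2s) ≳ 1 / M`, which for `s ≥ 1/2` gives `|p - q| ≳ 1 / M`. Take `v` such that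
`A ∩ (Aᶜ - v)` is not null (it exists because the integral of its measure over `v` is `|A| |Aᶜ|`). A
segment from a good point `x ∈ A` to a good point `x + v ∉ A` must cross a stretch of length
`≳ 1 / M` on which `g > M`, and all points of `A ∩ (Aᶜ - v)` but a set of measure `2 |{g > M}|` are
such `x`; integrating over `x` gives `|{g > M}| ≳ 1 / M` for all large `M`, and summing over dyadic
`M` gives `∫ g = ∞`.
-/

open MeasureTheory Metric Set ENNReal Module
open scoped NNReal

theorem ofReal_div_le_volume_of_separated {X : Type*} [PseudoMetricSpace X] {γ : ℝ → X}
    {K : ℝ≥0} (hγ : LipschitzWith K γ) {P Q : Set X} {δ : ℝ} (hδ : 0 < δ)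
    (hPQ : ∀ p ∈ P, ∀ q ∈ Q, δ ≤ dist p q) {a b : ℝ} (hab : a ≤ b) (ha : γ a ∈ P)
    (hb : γ b ∈ Q) :
    ENNReal.ofReal (δ / K) ≤ volume {t ∈ Icc a b | γ t ∉ P ∪ Q} := by
  rcases eq_or_ne K 0 with rfl | hK
  · simp -- `δ / 0 = 0`
  have hK : (0 : ℝ) < K := by positivity
  have hUV : ∀ w, w ∈ thickening (δ / 2) P → w ∉ thickening (δ / 2) Q := by
    simp only [mem_thickening_iff]
    rintro w ⟨p, hp, hwp⟩ ⟨q, hq, hwq⟩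
    linarith [hPQ p hp q hq, dist_triangle_left p q w]
  obtain ⟨c, hc, hcU, hcV⟩ : ∃ c ∈ Icc a b,
      γ c ∉ thickening (δ / 2) P ∧ γ c ∉ thickening (δ / 2) Q := by
    by_contra! h
    obtain ⟨c, -, hcU, hcV⟩ := isPreconnected_Icc
      (γ ⁻¹' thickening (δ / 2) P) (γ ⁻¹' thickening (δ / 2) Q)
      (isOpen_thickening.preimage hγ.continuous) (isOpen_thickening.preimage hγ.continuous)
      (fun t ht => (em (γ t ∈ thickening (δ / 2) P)).imp id (h t ht))
      ⟨a, left_mem_Icc.2 hab, self_subset_thickening (by positivity) _ ha⟩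
      ⟨b, right_mem_Icc.2 hab, self_subset_thickening (by positivity) _ hb⟩
    exact hUV _ hcU hcV
  have hbad : ∀ t ∈ Ioo (c - δ / (2 * K)) (c + δ / (2 * K)), γ t ∉ P ∪ Q := by
    intro t ht hPQt
    have hdist : dist (γ c) (γ t) < δ / 2 := by
      calc dist (γ c) (γ t) ≤ K * dist c t := hγ.dist_le_mul c t
        _ < K * (δ / (2 * K)) := by
          gcongr
          rw [Real.dist_eq, abs_lt]
          constructor <;> linarith [ht.1, ht.2]
        _ = δ / 2 := by field_simp
    rcases hPQt with hP | hQ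
    · exact hcU (mem_thickening_iff.2 ⟨_, hP, hdist⟩)
    · exact hcV (mem_thickening_iff.2 ⟨_, hQ, hdist⟩)
  calc ENNReal.ofReal (δ / K) = volume (Ioo (c - δ / (2 * K)) (c + δ / (2 * K))) := by
        rw [Real.volume_Ioo]; congr 1; field_simp; ring
    _ ≤ volume {t ∈ Icc a b | γ t ∉ P ∪ Q} := by
        refine measure_mono fun t ht => ⟨⟨?_, ?_⟩, hbad t ht⟩
        · by_contra! hta
          exact hbad a ⟨by linarith [ht.1], by linarith [hc.1, div_pos hδ (mul_pos two_pos hK)]⟩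
            (Or.inl ha)
        · by_contra! htb
          exact hbad b ⟨by linarith [hc.2, div_pos hδ (mul_pos two_pos hK)], by linarith [ht.2]⟩
            (Or.inr hb)

section Translation

variable {E : Type*} [NormedAddCommGroup E] [NormedSpace ℝ E] [MeasurableSpace E] [BorelSpace E]
  [SecondCountableTopology E] (μ : Measure E) [SFinite μ]

theorem measurableSet_setOf_add_smul_mem {S : Set E} (hS : MeasurableSet S) (v : E) :
    MeasurableSet {z : E × ℝ | z.2 ∈ Icc 0 1 ∧ z.1 + z.2 • v ∈ S} :=
  (measurable_snd measurableSet_Icc).inter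
    (hS.preimage (measurable_fst.add (measurable_snd.smul_const v)))

theorem lintegral_volume_setOf_add_smul_mem [μ.IsAddRightInvariant] {S : Set E}
    (hS : MeasurableSet S) (v : E) :
    ∫⁻ x, volume {t ∈ Icc (0 : ℝ) 1 | x + t • v ∈ S} ∂μ = μ S := by
  have hT := measurableSet_setOf_add_smul_mem hS v
  have hslice : ∀ t : ℝ, μ ((·, t) ⁻¹' {z : E × ℝ | z.2 ∈ Icc 0 1 ∧ z.1 + z.2 • v ∈ S}) =
      (Icc (0 : ℝ) 1).indicator (fun _ => μ S) t := by
    intro t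
    by_cases ht : t ∈ Icc (0 : ℝ) 1
    · rw [indicator_of_mem ht, ← measure_preimage_add_right μ (t • v) S]
      congr 1 with x
      simp only [mem_preimage, mem_ofPred_eq, and_iff_right ht]
    · rw [indicator_of_notMem ht, measure_eq_zero_iff_ae_notMem]
      exact ae_of_all _ fun x hx => ht hx.1
  calc ∫⁻ x, volume {t ∈ Icc (0 : ℝ) 1 | x + t • v ∈ S} ∂μ
      = (μ.prod volume) {z : E × ℝ | z.2 ∈ Icc 0 1 ∧ z.1 + z.2 • v ∈ S} :=
        (Measure.prod_apply hT).symm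
    _ = μ S := by
        rw [Measure.prod_apply_symm hT]
        simp_rw [hslice]
        simp

theorem ofReal_div_norm_mul_measure_le_of_separated [μ.IsAddRightInvariant] {P Q S W : Set E}
    (hS : MeasurableSet S) (hcover : Sᶜ ⊆ P ∪ Q) {δ : ℝ} (hδ : 0 < δ)
    (hPQ : ∀ p ∈ P, ∀ q ∈ Q, δ ≤ dist p q) {v : E} (hW : ∀ x ∈ W, x ∈ P ∧ x + v ∈ Q) :
    ENNReal.ofReal (δ / ‖v‖) * μ W ≤ μ S := by
  have hT := measurableSet_setOf_add_smul_mem hS v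
  have hγ : ∀ x : E, LipschitzWith ‖v‖₊ fun t : ℝ => x + t • v := fun x =>
    LipschitzWith.of_dist_le_mul fun t t' => by
      rw [dist_add_left, dist_eq_norm, ← sub_smul, norm_smul, Real.norm_eq_abs, mul_comm,
        coe_nnnorm, Real.dist_eq]
  calc ENNReal.ofReal (δ / ‖v‖) * μ W = ∫⁻ _ in W, ENNReal.ofReal (δ / ‖v‖) ∂μ :=
        (setLIntegral_const W _).symm
    _ ≤ ∫⁻ x in W, volume {t ∈ Icc (0 : ℝ) 1 | x + t • v ∈ S} ∂μ := by
        refine setLIntegral_mono (measurable_measure_prodMk_left hT) fun x hx => ?_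
        refine (ofReal_div_le_volume_of_separated (hγ x) hδ hPQ zero_le_one
          (by simpa using (hW x hx).1) (by simpa using (hW x hx).2)).trans (measure_mono ?_)
        exact fun t ht => ⟨ht.1, by_contra fun h => ht.2 (hcover h)⟩
    _ ≤ ∫⁻ x, volume {t ∈ Icc (0 : ℝ) 1 | x + t • v ∈ S} ∂μ := setLIntegral_le_lintegral _ _
    _ = μ S := lintegral_volume_setOf_add_smul_mem μ hS v

end Translation

theorem exists_measure_inter_preimage_add_compl_pos {G : Type*} [AddGroup G] [MeasurableSpace G]
    [MeasurableAdd₂ G] (μ : Measure G) [SFinite μ] [μ.IsAddLeftInvariant] {A : Set G}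
    (hA : MeasurableSet A) (hA1 : μ A ≠ 0) (hA2 : μ Aᶜ ≠ 0) :
    ∃ v, 0 < μ (A ∩ (· + v) ⁻¹' Aᶜ) := by
  have hT : MeasurableSet {z : G × G | z.1 ∈ A ∧ z.1 + z.2 ∈ Aᶜ} :=
    (measurable_fst hA).inter (hA.compl.preimage (measurable_fst.add measurable_snd))
  have key : ∫⁻ v, μ (A ∩ (· + v) ⁻¹' Aᶜ) ∂μ = μ A * μ Aᶜ := by
    calc ∫⁻ v, μ (A ∩ (· + v) ⁻¹' Aᶜ) ∂μ
        = (μ.prod μ) {z : G × G | z.1 ∈ A ∧ z.1 + z.2 ∈ Aᶜ} :=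
          (Measure.prod_apply_symm hT).symm
      _ = ∫⁻ x, A.indicator (fun _ => μ Aᶜ) x ∂μ := by
          rw [Measure.prod_apply hT]
          congr 1 with x
          by_cases hx : x ∈ A
          · rw [indicator_of_mem hx, ← measure_preimage_add μ x Aᶜ]
            congr 1 with v
            simp [hx]
          · simp [hx]
      _ = μ A * μ Aᶜ := by rw [lintegral_indicator_const hA, mul_comm]
  by_contra! h
  have : μ A * μ Aᶜ ≤ 0 := key ▸ (lintegral_mono h).trans_eq lintegral_zero
  exact mul_ne_zero hA1 hA2 (nonpos_iff_eq_zero.1 this)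

section Energy

variable {E : Type*} [NormedAddCommGroup E] [MeasureSpace E]

noncomputable def energyDensity (u : E → ℝ) (p : ℝ) (x : E) : ℝ≥0∞ :=
  ∫⁻ y, ENNReal.ofReal ((u x - u y) ^ 2 / ‖x - y‖ ^ p)

theorem measurable_energyDensity [BorelSpace E] [SecondCountableTopology E]
    [SFinite (volume : Measure E)] {u : E → ℝ} (hu : Measurable u) (p : ℝ) :
    Measurable (energyDensity u p) :=
  (show Measurable fun z : E × E =>
    ENNReal.ofReal ((u z.1 - u z.2) ^ 2 / ‖z.1 - z.2‖ ^ p) by fun_prop).lintegral_prod_right'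

theorem measure_closedBall_inter_le_energyDensity [OpensMeasurableSpace E] {u : E → ℝ}
    (hu : Measurable u) {p : ℝ} (hp : 0 ≤ p) (x : E) (ρ : ℝ) :
    volume (closedBall x ρ ∩ {y | 1 ≤ (u x - u y) ^ 2}) ≤
      ENNReal.ofReal (ρ ^ p) * energyDensity u p x := by
  have hT : MeasurableSet (closedBall x ρ ∩ {y | 1 ≤ (u x - u y) ^ 2}) :=
    measurableSet_closedBall.inter (measurableSet_le measurable_const (by fun_prop))
  rw [energyDensity, ← lintegral_const_mul' _ _ ofReal_ne_top, ← lintegral_indicator_one hT]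
  refine lintegral_mono fun y => ?_
  by_cases hy : y ∈ closedBall x ρ ∩ {y | 1 ≤ (u x - u y) ^ 2}
  · rw [indicator_of_mem hy, Pi.one_apply]
    obtain ⟨hyρ, hyu⟩ := hy
    have hxy : 0 < ‖x - y‖ := by
      refine norm_pos_iff.2 (sub_ne_zero.2 fun h => ?_)
      rw [mem_ofPred_eq, h, sub_self] at hyu
      norm_num at hyu
    have hpow : 0 < ‖x - y‖ ^ p := Real.rpow_pos_of_pos hxy p
    have hle : ‖x - y‖ ^ p ≤ ρ ^ p := by
      gcongr
      simpa [dist_eq_norm, norm_sub_rev] using hyρ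
    rw [← ENNReal.ofReal_mul (Real.rpow_nonneg (dist_nonneg.trans hyρ) p), ← ENNReal.ofReal_one]
    refine ENNReal.ofReal_le_ofReal ?_
    rw [mul_div_assoc', le_div_iff₀ hpow, one_mul]
    exact hle.trans (le_mul_of_one_le_right (hpow.le.trans hle) hyu)
  · rw [indicator_of_notMem hy]
    exact bot_le

end Energy

theorem one_le_sq_indicator_sub {α : Type*} {A : Set α} {x y : α} (h : x ∈ A ↔ y ∉ A) :
    1 ≤ (A.indicator (fun _ => (1 : ℝ)) x - A.indicator (fun _ => (1 : ℝ)) y) ^ 2 := by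
  by_cases hx : x ∈ A
  · simp [hx, h.1 hx]
  · simp [hx, not_not.1 (mt h.2 hx)]

theorem closedBall_midpoint_subset_union {E : Type*} [NormedAddCommGroup E] [NormedSpace ℝ E]
    (A : Set E) (p q : E) :
    closedBall (midpoint ℝ p q) (dist p q / 2) ⊆
      (closedBall p (dist p q) \ A) ∪ (closedBall q (dist p q) ∩ A) := by
  intro y hy
  have hyp : dist y p ≤ dist p q := by
    linarith [dist_triangle y (midpoint ℝ p q) p, mem_closedBall.1 hy,
      show dist (midpoint ℝ p q) p = dist p q / 2 by
        rw [dist_midpoint_left, Real.norm_two, inv_mul_eq_div]]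
  have hyq : dist y q ≤ dist p q := by
    linarith [dist_triangle y (midpoint ℝ p q) q, mem_closedBall.1 hy,
      show dist (midpoint ℝ p q) q = dist p q / 2 by
        rw [dist_midpoint_right, Real.norm_two, inv_mul_eq_div]]
  by_cases hy : y ∈ A
  exacts [Or.inr ⟨hyq, hy⟩, Or.inl ⟨hyp, hy⟩]

section Gap

variable {E : Type*} [NormedAddCommGroup E] [NormedSpace ℝ E] [FiniteDimensional ℝ E]
  [MeasureSpace E] [(volume : Measure E).IsAddHaarMeasure]

variable (E) in
noncomputable def gapConst : ℝ := (volume (ball (0 : E) 1)).toReal / 2 ^ (finrank ℝ E + 1)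

theorem gapConst_pos : 0 < gapConst E :=
  div_pos (ENNReal.toReal_pos (measure_ball_pos volume 0 one_pos).ne' measure_ball_lt_top.ne)
    (by positivity)

variable [BorelSpace E]

theorem gapConst_le_mul_dist_rpow {A : Set E} (hA : MeasurableSet A) {s M : ℝ} (hs : 0 < s)
    {p q : E} (hp : p ∈ A) (hq : q ∉ A)
    (hgp : energyDensity (A.indicator fun _ => 1) (finrank ℝ E + 2 * s) p ≤ ENNReal.ofReal M)
    (hgq : energyDensity (A.indicator fun _ => 1) (finrank ℝ E + 2 * s) q ≤ ENNReal.ofReal M) :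
    gapConst E ≤ M * dist p q ^ (2 * s) := by
  set N := finrank ℝ E
  set u : E → ℝ := A.indicator fun _ => 1
  set d := dist p q
  set κ := volume (ball (0 : E) 1)
  have hd : 0 < d := dist_pos.2 fun h => hq (h ▸ hp)
  have hu : Measurable u := measurable_const.indicator hA
  have hP : (0 : ℝ) ≤ N + 2 * s := by positivity
  have hp' : volume (closedBall p d \ A) ≤ ENNReal.ofReal (d ^ (N + 2 * s)) * ENNReal.ofReal M :=
    calc volume (closedBall p d \ A) ≤ volume (closedBall p d ∩ {y | 1 ≤ (u p - u y) ^ 2}) :=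
          measure_mono fun y hy => ⟨hy.1, one_le_sq_indicator_sub (iff_of_true hp hy.2)⟩
      _ ≤ _ := (measure_closedBall_inter_le_energyDensity hu hP p d).trans (by gcongr)
  have hq' : volume (closedBall q d ∩ A) ≤ ENNReal.ofReal (d ^ (N + 2 * s)) * ENNReal.ofReal M :=
    calc volume (closedBall q d ∩ A) ≤ volume (closedBall q d ∩ {y | 1 ≤ (u q - u y) ^ 2}) :=
          measure_mono fun y hy =>
            ⟨hy.1, one_le_sq_indicator_sub (iff_of_false hq (not_not.2 hy.2))⟩
      _ ≤ _ := (measure_closedBall_inter_le_energyDensity hu hP q d).trans (by gcongr)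
  have hvol : ENNReal.ofReal ((d / 2) ^ N * κ.toReal) ≤
      ENNReal.ofReal (2 * d ^ (N + 2 * s) * M) := by
    calc ENNReal.ofReal ((d / 2) ^ N * κ.toReal)
        = volume (closedBall (midpoint ℝ p q) (d / 2)) := by
          rw [Measure.addHaar_closedBall _ _ (by positivity), ENNReal.ofReal_mul (by positivity),
            ENNReal.ofReal_toReal measure_ball_lt_top.ne]
      _ ≤ volume (closedBall p d \ A) + volume (closedBall q d ∩ A) :=
          (measure_mono (closedBall_midpoint_subset_union A p q)).trans (measure_union_le _ _)
      _ ≤ ENNReal.ofReal (2 * d ^ (N + 2 * s) * M) := by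
          rw [mul_assoc, ENNReal.ofReal_mul zero_le_two, ENNReal.ofReal_ofNat, two_mul,
            ENNReal.ofReal_mul (by positivity)]
          exact add_le_add hp' hq'
  have hreal : (d / 2) ^ N * κ.toReal ≤ 2 * d ^ (N + 2 * s) * M := by
    refine ((ENNReal.ofReal_le_ofReal_iff').1 hvol).resolve_right (not_le.2 ?_)
    exact mul_pos (by positivity) (ENNReal.toReal_pos (measure_ball_pos volume 0 one_pos).ne'
      measure_ball_lt_top.ne)
  rw [Real.rpow_add hd, Real.rpow_natCast, div_pow, div_mul_eq_mul_div,
    div_le_iff₀ (by positivity)] at hreal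
  show κ.toReal / 2 ^ (N + 1) ≤ M * d ^ (2 * s)
  rw [div_le_iff₀ (by positivity)]
  refine le_of_mul_le_mul_left ?_ (pow_pos hd N)
  calc d ^ N * κ.toReal ≤ 2 * (d ^ N * d ^ (2 * s)) * M * 2 ^ N := hreal
    _ = d ^ N * (M * d ^ (2 * s) * 2 ^ (N + 1)) := by ring

theorem gapConst_div_le_dist {A : Set E} (hA : MeasurableSet A) {s M : ℝ} (hs : 1 / 2 ≤ s)
    (hM : gapConst E ≤ M) {p q : E} (hp : p ∈ A) (hq : q ∉ A)
    (hgp : energyDensity (A.indicator fun _ => 1) (finrank ℝ E + 2 * s) p ≤ ENNReal.ofReal M)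
    (hgq : energyDensity (A.indicator fun _ => 1) (finrank ℝ E + 2 * s) q ≤ ENNReal.ofReal M) :
    gapConst E / M ≤ dist p q := by
  have hM0 : 0 < M := gapConst_pos.trans_le hM
  have key := gapConst_le_mul_dist_rpow hA (by linarith) hp hq hgp hgq
  rcases le_or_gt 1 (dist p q) with h1 | h1
  · exact ((div_le_one hM0).2 hM).trans h1
  · rw [div_le_iff₀ hM0, mul_comm]
    calc gapConst E ≤ M * dist p q ^ (2 * s) := key
      _ ≤ M * dist p q ^ (1 : ℝ) := mul_le_mul_of_nonneg_left
          (Real.rpow_le_rpow_of_exponent_ge' dist_nonneg h1.le zero_le_one (by linarith)) hM0.le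
      _ = M * dist p q := by rw [Real.rpow_one]

theorem ofReal_mul_measure_le_mul_measure_lt_energyDensity {A : Set E} (hA : MeasurableSet A)
    {s M : ℝ} (hs : 1 / 2 ≤ s) (v : E) (hM : gapConst E ≤ M) (hMv : gapConst E ≤ M * ‖v‖) :
    ENNReal.ofReal (gapConst E / ‖v‖) * volume (A ∩ (· + v) ⁻¹' Aᶜ) ≤
      3 * (ENNReal.ofReal M * volume {x | ENNReal.ofReal M <
        energyDensity (A.indicator fun _ => 1) (finrank ℝ E + 2 * s) x}) := by
  set S := {x | ENNReal.ofReal M <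
    energyDensity (A.indicator fun _ => 1) (finrank ℝ E + 2 * s) x}
  set W := A ∩ (· + v) ⁻¹' Aᶜ
  set T := S ∪ (· + v) ⁻¹' S
  set δ := gapConst E / M
  have hc := gapConst_pos (E := E)
  have hM0 : 0 < M := hc.trans_le hM
  have hS : MeasurableSet S := measurableSet_lt measurable_const
    (measurable_energyDensity (measurable_const.indicator hA) _)
  have hsep : ∀ p ∈ A \ S, ∀ q ∈ Aᶜ \ S, δ ≤ dist p q := fun p hp q hq =>
    gapConst_div_le_dist hA hs hM hp.1 hq.1 (not_lt.1 hp.2) (not_lt.1 hq.2)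
  have hcover : Sᶜ ⊆ (A \ S) ∪ (Aᶜ \ S) := by
    intro x hx
    by_cases h : x ∈ A
    exacts [Or.inl ⟨h, hx⟩, Or.inr ⟨h, hx⟩]
  have hgood : ENNReal.ofReal (δ / ‖v‖) * volume (W \ T) ≤ volume S :=
    ofReal_div_norm_mul_measure_le_of_separated volume hS hcover (div_pos hc hM0) hsep
      fun x hx => ⟨⟨hx.1.1, fun h => hx.2 (Or.inl h)⟩, ⟨hx.1.2, fun h => hx.2 (Or.inr h)⟩⟩
  have hT : volume T ≤ 2 * volume S :=
    (measure_union_le _ _).trans_eq (by rw [measure_preimage_add_right, two_mul])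
  have hδv : ENNReal.ofReal (δ / ‖v‖) ≤ 1 := by
    rw [ENNReal.ofReal_le_one, div_div, div_le_one (hc.trans_le hMv)]
    exact hMv
  calc ENNReal.ofReal (gapConst E / ‖v‖) * volume W
      = ENNReal.ofReal M * (ENNReal.ofReal (δ / ‖v‖) * volume W) := by
        rw [← mul_assoc, ← ENNReal.ofReal_mul hM0.le]
        congr 2
        simp only [δ]
        field_simp
    _ ≤ ENNReal.ofReal M *
          (ENNReal.ofReal (δ / ‖v‖) * volume (W \ T) + ENNReal.ofReal (δ / ‖v‖) * volume T) := by
        rw [← mul_add]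
        gcongr
        exact (measure_mono (subset_sdiff_union W T)).trans (measure_union_le _ _)
    _ ≤ ENNReal.ofReal M * (volume S + 1 * (2 * volume S)) := by
        gcongr
    _ = 3 * (ENNReal.ofReal M * volume S) := by ring

end Gap

theorem sum_range_ite_mul_two_pow_lt_le (a y : ℝ≥0∞) (K : ℕ) :
    ∑ k ∈ Finset.range K, (if a * 2 ^ k < y then a * 2 ^ k else 0) ≤ 2 * y := by
  suffices ∑ k ∈ Finset.range K, (if a * 2 ^ k < y then a * 2 ^ k else 0) ≤ a * 2 ^ K ∧
      ∑ k ∈ Finset.range K, (if a * 2 ^ k < y then a * 2 ^ k else 0) ≤ 2 * y from this.2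
  induction K with
  | zero => simp
  | succ K ih =>
    rw [Finset.sum_range_succ, pow_succ, ← mul_assoc, mul_two]
    split_ifs with h
    · exact ⟨add_le_add_left ih.1 _, (add_le_add_left ih.1 _).trans (by rw [← two_mul]; gcongr)⟩
    · rw [add_zero]
      exact ⟨ih.1.trans le_self_add, ih.2⟩

theorem lintegral_eq_top_of_le_mul_measure_lt {α : Type*} [MeasurableSpace α] {μ : Measure α}
    {f : α → ℝ≥0∞} (hf : Measurable f) {m : ℝ≥0∞} (hm : m ≠ 0) {M₀ : ℝ} (hM₀ : 0 ≤ M₀)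
    (h : ∀ M, M₀ ≤ M → m ≤ ENNReal.ofReal M * μ {x | ENNReal.ofReal M < f x}) :
    ∫⁻ x, f x ∂μ = ∞ := by
  set a := ENNReal.ofReal M₀
  have hk : ∀ k : ℕ, m ≤ a * 2 ^ k * μ {x | a * 2 ^ k < f x} := fun k => by
    have := h (M₀ * 2 ^ k) (le_mul_of_one_le_right hM₀ (one_le_pow₀ one_le_two))
    rwa [ENNReal.ofReal_mul hM₀, ENNReal.ofReal_pow zero_le_two, ENNReal.ofReal_ofNat] at this
  have hset : ∀ k : ℕ, MeasurableSet {x | a * 2 ^ k < f x} :=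
    fun k => measurableSet_lt measurable_const hf
  have : ∞ ≤ 2 * ∫⁻ x, f x ∂μ :=
    calc ∞ = ∑' _ : ℕ, m := (ENNReal.tsum_const_eq_top_of_ne_zero hm).symm
      _ ≤ ∑' k : ℕ, a * 2 ^ k * μ {x | a * 2 ^ k < f x} := ENNReal.tsum_le_tsum hk
      _ = ∫⁻ x, ∑' k : ℕ, {x | a * 2 ^ k < f x}.indicator (fun _ => a * 2 ^ k) x ∂μ := by
          rw [lintegral_tsum fun k => (measurable_const.indicator (hset k)).aemeasurable]
          simp_rw [lintegral_indicator_const (hset _)]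
      _ ≤ ∫⁻ x, 2 * f x ∂μ := by
          refine lintegral_mono fun x => ENNReal.tsum_le_of_sum_range_le fun K => ?_
          simpa [indicator_apply] using sum_range_ite_mul_two_pow_lt_le a (f x) K
      _ = 2 * ∫⁻ x, f x ∂μ := lintegral_const_mul 2 hf
  simpa [ENNReal.mul_eq_top] using top_le_iff.1 this

theorem stmt9_general {n : ℕ} (A : Set (EuclideanSpace ℝ (Fin n)))
    (hA : MeasurableSet A) (hA1 : 0 < volume A) (hA2 : 0 < volume Aᶜ) :
    ∀ s : ℝ, 1 / 2 ≤ s → ¬ MemHs s (A.indicator (fun _ => (1 : ℝ))) := by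
  rintro s hs ⟨-, hfin⟩
  obtain ⟨v, hv⟩ := exists_measure_inter_preimage_add_compl_pos volume hA hA1.ne' hA2.ne'
  have hv0 : v ≠ 0 := by rintro rfl; simp at hv
  set c := gapConst (EuclideanSpace ℝ (Fin n))
  have hc : 0 < c := gapConst_pos
  have hm : ENNReal.ofReal (c / ‖v‖) * volume (A ∩ (· + v) ⁻¹' Aᶜ) / 3 ≠ 0 :=
    ENNReal.div_ne_zero.2 ⟨mul_ne_zero (ENNReal.ofReal_pos.2 (by positivity)).ne' hv.ne',
      ENNReal.ofNat_ne_top⟩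
  have htop := lintegral_eq_top_of_le_mul_measure_lt (M₀ := max c (c / ‖v‖))
    (measurable_energyDensity (measurable_const.indicator hA) _) hm (hc.le.trans (le_max_left _ _))
    fun M hM => ENNReal.div_le_of_le_mul' <|
      ofReal_mul_measure_le_mul_measure_lt_energyDensity hA hs v (le_of_max_le_left hM)
        ((div_le_iff₀ (norm_pos_iff.2 hv0)).1 (le_of_max_le_right hM))
  rw [finrank_euclideanSpace_fin] at htop
  exact hfin.ne htop

/-- If `A ⊆ ℝ^n` and its complement both have positive measure, then the indicator function
`𝟙_A` does not belong to `H^s(ℝ^n)` for any `s ≥ 1/2`; in particular `𝟙_A ∉ H^{1/2}`. -/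
theorem stmt9 {n : ℕ} (hn : 0 < n) (A : Set (EuclideanSpace ℝ (Fin n)))
    (hA : MeasurableSet A) (hA1 : 0 < volume A) (hA2 : 0 < volume Aᶜ) :
    ∀ s : ℝ, 1 / 2 ≤ s → ¬ MemHs s (A.indicator (fun _ => (1 : ℝ))) :=
  stmt9_general A hA hA1 hA2
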